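/- (Local unitary invariance of the entanglement measure on pure states.) Let n > 2 and m > 2, let P₀, Q₀ be fixed rank-one orthogonal projections on ℂⁿ, ℂᵐ, and let μₙ, μₘ be the normalized Haar probability measures on U(n), U(m). For every density matrix σ indexed by (Fin n × Fin m) × (Fin n × Fin m) and all unitaries U ∈ U(n), V ∈ U(m), setting σ' := (U ⊗ₖ V)·σ·(U ⊗ₖ V)ᴴ and F_M(p,q) := tr(M·(p ⊗ₖ q)) − tr((tr₂M)·p)·tr((tr₁M)·q), one has ∫_{U(n)}∫_{U(m)} |F_{σ'}(W P₀ Wᴴ, X Q₀ Xᴴ)|² dμₘ(X) dμₙ(W) = ∫_{U(n)}∫_{U(m)} |F_{σ}(W P₀ Wᴴ, X Q₀ Xᴴ)|² dμₘ(X) dμₙ(W). In particular E(U⊗V σ (U⊗V)ᴴ) = E(σ) for pure states σ. -/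

import Mathlib

open MeasureTheory Matrix Kronecker
open scoped ComplexOrder

noncomputable instance (k : Type*) [Fintype k] [DecidableEq k] :
    MeasurableSpace (Matrix.unitaryGroup k ℂ) := borel _

/-- `p` is a rank-one orthogonal projection. -/
def IsRankOneProj {k : Type*} [Fintype k] [DecidableEq k] (p : Matrix k k ℂ) : Prop :=
  p.IsHermitian ∧ p * p = p ∧ p.rank = 1

/-- Partial trace over the second factor. -/
noncomputable def ptrace2 {n m : ℕ} (M : Matrix (Fin n × Fin m) (Fin n × Fin m) ℂ) :
    Matrix (Fin n) (Fin n) ℂ :=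
  Matrix.of fun i j => ∑ k : Fin m, M (i, k) (j, k)

/-- Partial trace over the first factor. -/
noncomputable def ptrace1 {n m : ℕ} (M : Matrix (Fin n × Fin m) (Fin n × Fin m) ℂ) :
    Matrix (Fin m) (Fin m) ℂ :=
  Matrix.of fun k l => ∑ i : Fin n, M (i, k) (i, l)

/-- The entanglement defect of `M` at the pair of projections `(p,q)`. -/
noncomputable def entDefect {n m : ℕ} (M : Matrix (Fin n × Fin m) (Fin n × Fin m) ℂ)
    (p : Matrix (Fin n) (Fin n) ℂ) (q : Matrix (Fin m) (Fin m) ℂ) : ℂ :=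
  (M * (p ⊗ₖ q)).trace - (ptrace2 M * p).trace * (ptrace1 M * q).trace

/-!
Every term of `entDefect` is a trace `tr (M (p ⊗ q))` (the partial-trace terms with `q = 1` or
`p = 1`), and by cyclicity `tr ((U ⊗ V) σ (U ⊗ V)ᴴ (p ⊗ q)) = tr (σ (Uᴴ p U ⊗ Vᴴ q V))`. Hence
conjugating `σ` by `U ⊗ V` amounts to replacing the integration variables `W, X` by `U⁻¹ W, V⁻¹ X`,
which leaves both integrals unchanged by left invariance of the measures.
-/

instance (k : Type*) [Fintype k] [DecidableEq k] :
    BorelSpace (Matrix.unitaryGroup k ℂ) := ⟨rfl⟩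

theorem integral_integral_mul_left_eq_self {G H E : Type*} [MeasurableSpace G] [Group G]
    [MeasurableMul G] [MeasurableSpace H] [Group H] [MeasurableMul H]
    [NormedAddCommGroup E] [NormedSpace ℝ E] (μ : Measure G) [μ.IsMulLeftInvariant]
    (ν : Measure H) [ν.IsMulLeftInvariant] (f : G → H → E) (g : G) (h : H) :
    ∫ x, ∫ y, f (g * x) (h * y) ∂ν ∂μ = ∫ x, ∫ y, f x y ∂ν ∂μ := by
  calc ∫ x, ∫ y, f (g * x) (h * y) ∂ν ∂μ = ∫ x, ∫ y, f (g * x) y ∂ν ∂μ := by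
        congr with x
        exact integral_mul_left_eq_self (f (g * x)) h
    _ = ∫ x, ∫ y, f x y ∂ν ∂μ := integral_mul_left_eq_self (fun x => ∫ y, f x y ∂ν) g

theorem trace_kronecker_conj_mul_kronecker {R l k : Type*} [Fintype l] [Fintype k]
    [CommSemiring R] [StarMul R] (σ : Matrix (l × k) (l × k) R) (A p : Matrix l l R)
    (B q : Matrix k k R) :
    ((A ⊗ₖ B) * σ * (A ⊗ₖ B)ᴴ * (p ⊗ₖ q)).trace
      = (σ * ((Aᴴ * p * A) ⊗ₖ (Bᴴ * q * B))).trace := by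
  rw [Matrix.mul_assoc, Matrix.mul_assoc, trace_mul_comm, conjTranspose_kronecker,
    Matrix.mul_assoc, ← mul_kronecker_mul, ← mul_kronecker_mul]

section PartialTrace

variable {n m : ℕ} (M : Matrix (Fin n × Fin m) (Fin n × Fin m) ℂ)

theorem trace_ptrace2_mul (p : Matrix (Fin n) (Fin n) ℂ) :
    (ptrace2 M * p).trace = (M * (p ⊗ₖ (1 : Matrix (Fin m) (Fin m) ℂ))).trace := by
  simp only [ptrace2, trace, diag, mul_apply, of_apply, kroneckerMap_apply, one_apply,
    Fintype.sum_prod_type, mul_ite, mul_one, mul_zero, Finset.sum_ite_eq', Finset.mem_univ,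
    if_true, Finset.sum_mul]
  exact Finset.sum_congr rfl fun _ _ => Finset.sum_comm

theorem trace_ptrace1_mul (q : Matrix (Fin m) (Fin m) ℂ) :
    (ptrace1 M * q).trace = (M * ((1 : Matrix (Fin n) (Fin n) ℂ) ⊗ₖ q)).trace := by
  simp only [ptrace1, trace, diag, mul_apply, of_apply, kroneckerMap_apply, one_apply,
    Fintype.sum_prod_type, ite_mul, one_mul, zero_mul, mul_ite, mul_zero, Finset.sum_mul]
  simp_rw [Finset.sum_comm (s := Finset.univ (α := Fin n)) (t := Finset.univ (α := Fin m)),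
    Finset.sum_ite_eq', Finset.mem_univ, if_true]

end PartialTrace

theorem entDefect_kronecker_conj {n m : ℕ} (σ : Matrix (Fin n × Fin m) (Fin n × Fin m) ℂ)
    (U : unitaryGroup (Fin n) ℂ) (V : unitaryGroup (Fin m) ℂ)
    (p : Matrix (Fin n) (Fin n) ℂ) (q : Matrix (Fin m) (Fin m) ℂ) :
    entDefect ((U.1 ⊗ₖ V.1) * σ * (U.1 ⊗ₖ V.1)ᴴ) p q
      = entDefect σ ((U.1)ᴴ * p * U.1) ((V.1)ᴴ * q * V.1) := by
  have hU : (U.1)ᴴ * 1 * U.1 = 1 := by rw [Matrix.mul_one]; exact U.2.1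
  have hV : (V.1)ᴴ * 1 * V.1 = 1 := by rw [Matrix.mul_one]; exact V.2.1
  simp only [entDefect, trace_ptrace2_mul, trace_ptrace1_mul, trace_kronecker_conj_mul_kronecker,
    hU, hV]

theorem entDefect_kronecker_conj_conj_eq_inv_mul {n m : ℕ}
    (σ : Matrix (Fin n × Fin m) (Fin n × Fin m) ℂ)
    (U W : unitaryGroup (Fin n) ℂ) (V X : unitaryGroup (Fin m) ℂ)
    (P : Matrix (Fin n) (Fin n) ℂ) (Q : Matrix (Fin m) (Fin m) ℂ) :
    entDefect ((U.1 ⊗ₖ V.1) * σ * (U.1 ⊗ₖ V.1)ᴴ) (W.1 * P * (W.1)ᴴ) (X.1 * Q * (X.1)ᴴ)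
      = entDefect σ ((U⁻¹ * W).1 * P * ((U⁻¹ * W).1)ᴴ) ((V⁻¹ * X).1 * Q * ((V⁻¹ * X).1)ᴴ) := by
  have hUW : (U⁻¹ * W).1 = (U.1)ᴴ * W.1 := rfl
  have hVX : (V⁻¹ * X).1 = (V.1)ᴴ * X.1 := rfl
  rw [entDefect_kronecker_conj, hUW, hVX]
  simp only [conjTranspose_mul, conjTranspose_conjTranspose, Matrix.mul_assoc]

theorem local_unitary_invariance_general (n m : ℕ)
    (P₀ : Matrix (Fin n) (Fin n) ℂ)
    (Q₀ : Matrix (Fin m) (Fin m) ℂ)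
    (μn : Measure (Matrix.unitaryGroup (Fin n) ℂ))
    [μn.IsMulLeftInvariant]
    (μm : Measure (Matrix.unitaryGroup (Fin m) ℂ))
    [μm.IsMulLeftInvariant]
    (σ : Matrix (Fin n × Fin m) (Fin n × Fin m) ℂ)
    (U : Matrix.unitaryGroup (Fin n) ℂ) (V : Matrix.unitaryGroup (Fin m) ℂ) :
    (∫ W : Matrix.unitaryGroup (Fin n) ℂ,
      ∫ X : Matrix.unitaryGroup (Fin m) ℂ,
        ‖entDefect ((U.1 ⊗ₖ V.1) * σ * (U.1 ⊗ₖ V.1)ᴴ)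
            (W.1 * P₀ * (W.1)ᴴ) (X.1 * Q₀ * (X.1)ᴴ)‖ ^ 2 ∂μm ∂μn)
      = ∫ W : Matrix.unitaryGroup (Fin n) ℂ,
          ∫ X : Matrix.unitaryGroup (Fin m) ℂ,
            ‖entDefect σ (W.1 * P₀ * (W.1)ᴴ) (X.1 * Q₀ * (X.1)ᴴ)‖ ^ 2 ∂μm ∂μn := by
  simp_rw [entDefect_kronecker_conj_conj_eq_inv_mul]
  exact integral_integral_mul_left_eq_self μn μm
    (fun W X => ‖entDefect σ (W.1 * P₀ * (W.1)ᴴ) (X.1 * Q₀ * (X.1)ᴴ)‖ ^ 2) U⁻¹ V⁻¹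

/-- Local unitary invariance of the entanglement measure on pure states:
`∫∫ |F_{(U⊗V)σ(U⊗V)ᴴ}|² dμₘ dμₙ = ∫∫ |F_σ|² dμₘ dμₙ`. -/
theorem local_unitary_invariance (n m : ℕ) (hn : 2 < n) (hm : 2 < m)
    (P₀ : Matrix (Fin n) (Fin n) ℂ) (hP₀ : IsRankOneProj P₀)
    (Q₀ : Matrix (Fin m) (Fin m) ℂ) (hQ₀ : IsRankOneProj Q₀)
    (μn : Measure (Matrix.unitaryGroup (Fin n) ℂ))
    [IsProbabilityMeasure μn] [μn.IsMulLeftInvariant]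
    (μm : Measure (Matrix.unitaryGroup (Fin m) ℂ))
    [IsProbabilityMeasure μm] [μm.IsMulLeftInvariant]
    (σ : Matrix (Fin n × Fin m) (Fin n × Fin m) ℂ)
    (hσ : σ.PosSemidef) (hσtr : σ.trace = 1)
    (U : Matrix.unitaryGroup (Fin n) ℂ) (V : Matrix.unitaryGroup (Fin m) ℂ) :
    (∫ W : Matrix.unitaryGroup (Fin n) ℂ,
      ∫ X : Matrix.unitaryGroup (Fin m) ℂ,
        ‖entDefect ((U.1 ⊗ₖ V.1) * σ * (U.1 ⊗ₖ V.1)ᴴ)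
            (W.1 * P₀ * (W.1)ᴴ) (X.1 * Q₀ * (X.1)ᴴ)‖ ^ 2 ∂μm ∂μn)
      = ∫ W : Matrix.unitaryGroup (Fin n) ℂ,
          ∫ X : Matrix.unitaryGroup (Fin m) ℂ,
            ‖entDefect σ (W.1 * P₀ * (W.1)ᴴ) (X.1 * Q₀ * (X.1)ᴴ)‖ ^ 2 ∂μm ∂μn :=
  local_unitary_invariance_general n m P₀ Q₀ μn μm σ U V
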